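/- arXiv:2604.26775 — 11 statements merged into one kernel-verified Lean document; each statement's English description precedes it below -/
import Mathlib

section
/- Let F : (V, ≼, *) → (W, ⋞, ⋆) be a map between commutative integral quantales. If F is preserving (i.e., for every V-category (X, a) the pair (X, F∘a) is a W-category), then F is a lax morphism of quantales: F is isotone, 1_W ⋞ F(1_V), and F(u) ⋆ F(v) ⋞ F(u * v) for all u, v ∈ V. -/
/-- A `V`-category over a (commutative integral) quantale whose operation is
`m` and whose unit is the top element: `⊤ ≤ a x x` and
`m (a x z) (a z y) ≤ a x y`. -/
def IsVCat {V : Type*} [CompleteLattice V] (m : V → V → V)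
    {X : Type*} (a : X → X → V) : Prop :=
  (∀ x, ⊤ ≤ a x x) ∧ (∀ x y z, m (a x z) (a z y) ≤ a x y)

/-- If `F` is a preserving map between commutative integral quantales (for
every `V`-category `(X,a)`, `(X, F ∘ a)` is a `W`-category), then `F` is a lax
morphism of quantales: isotone, `1_W ≤ F 1_V`, and
`F u ⋆ F v ≤ F (u * v)`. -/
theorem stmt7 {V W : Type*} [CompleteLattice V] [CompleteLattice W]
    (mV : V → V → V) (mW : W → W → W)
    (hVassoc : ∀ a b c, mV (mV a b) c = mV a (mV b c))
    (hVcomm : ∀ a b, mV a b = mV b a)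
    (hVdist : ∀ (a : V) (s : Set V), mV a (sSup s) = ⨆ b ∈ s, mV a b)
    (hVunit : ∀ a, mV ⊤ a = a)
    (hWassoc : ∀ a b c, mW (mW a b) c = mW a (mW b c))
    (hWcomm : ∀ a b, mW a b = mW b a)
    (hWdist : ∀ (a : W) (s : Set W), mW a (sSup s) = ⨆ b ∈ s, mW a b)
    (hWunit : ∀ a, mW ⊤ a = a)
    (F : V → W)
    (hpres : ∀ (X : Type) (a : X → X → V), IsVCat mV a →
      IsVCat mW (fun x y => F (a x y))) :
    Monotone F ∧ (⊤ : W) ≤ F ⊤ ∧ ∀ u v, mW (F u) (F v) ≤ F (mV u v) := by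
  have mVbot : ∀ x : V, mV x ⊥ = ⊥ := by
    intro x
    simpa using hVdist x ∅
  have mVbot' : ∀ x : V, mV ⊥ x = ⊥ := fun x => by rw [hVcomm]; exact mVbot x
  have mVtop : ∀ x : V, mV x ⊤ = x := fun x => by rw [hVcomm, hVunit]
  have mVle1 : ∀ x y : V, mV x y ≤ x := by
    intro x y
    have h := hVdist x {y, ⊤}
    have h2 : mV x y ≤ mV x (sSup {y, ⊤}) := by
      rw [h]; exact le_biSup _ (by simp)
    simpa [mVtop] using h2
  have mVle2 : ∀ x y : V, mV x y ≤ y := fun x y => (hVcomm x y) ▸ mVle1 y x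
  -- top
  have hcat0 : IsVCat mV (fun (_ _ : PUnit) => (⊤ : V)) :=
    ⟨fun _ => le_rfl, fun _ _ _ => by rw [hVunit]⟩
  have hFtop : (⊤ : W) ≤ F ⊤ := (hpres PUnit _ hcat0).1 PUnit.unit
  have hFtop' : F (⊤ : V) = ⊤ := top_le_iff.mp hFtop
  -- general chain category on three points
  have key : ∀ u v w : V, mV u v ≤ w →
      mW (F u) (F v) ≤ F w := by
    intro u v w huv
    set a : Fin 3 → Fin 3 → V := ![![⊤, u, w], ![⊥, ⊤, v], ![⊥, ⊥, ⊤]] with ha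
    have hcat : IsVCat mV a := by
      constructor
      · intro x; fin_cases x <;> simp [ha]
      · intro x y z
        fin_cases x <;> fin_cases y <;> fin_cases z <;>
          simp [ha, Matrix.vecHead, Matrix.vecTail, mVbot, mVbot', mVtop, hVunit,
            mVle1, mVle2, huv]
    have := (hpres (Fin 3) a hcat).2 0 2 1
    simpa [ha] using this
  refine ⟨?_, hFtop, ?_⟩
  · intro u v huv
    have := key u ⊤ v (by rw [mVtop]; exact huv)
    rw [hFtop'] at this
    rwa [hWcomm, hWunit] at this
  · intro u v
    exact key u v (mV u v) le_rfl
end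

section
/- Let F be a map between commutative integral quantales (V, ≼, *) and (W, ⋞, ⋆). The following are equivalent: (1) F is Cat-preserving; (2) F is preserving; (3) F is a lax morphism of quantales; (4) F preserves asymmetric triangle triplets and F(1_V) = 1_W. -/
/-- Theorem: for a map `F` between commutative integral quantales `(V, ≤, mV)`
and `(W, ≤, mW)` the following are equivalent:
(1) `F` is `Cat`-preserving; (2) `F` is preserving; (3) `F` is a lax morphism
of quantales; (4) `F` preserves asymmetric triangle triplets and
`F 1_V = 1_W` (the units being the top elements). -/
theorem stmt9 {V W : Type*} [CompleteLattice V] [CompleteLattice W]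
    (mV : V → V → V) (mW : W → W → W)
    (hVassoc : ∀ a b c, mV (mV a b) c = mV a (mV b c))
    (hVcomm : ∀ a b, mV a b = mV b a)
    (hVdist : ∀ (a : V) (s : Set V), mV a (sSup s) = ⨆ b ∈ s, mV a b)
    (hVunit : ∀ a, mV ⊤ a = a)
    (hWassoc : ∀ a b c, mW (mW a b) c = mW a (mW b c))
    (hWcomm : ∀ a b, mW a b = mW b a)
    (hWdist : ∀ (a : W) (s : Set W), mW a (sSup s) = ⨆ b ∈ s, mW a b)
    (hWunit : ∀ a, mW ⊤ a = a)
    (F : V → W) :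
    List.TFAE
      [ -- (1) `F` is `Cat`-preserving:
        (∀ (X : Type) (a : X → X → V), IsVCat mV a →
          IsVCat mW (fun x y => F (a x y))) ∧
        (∀ (X Y : Type) (a : X → X → V) (b : Y → Y → V) (f : X → Y),
          IsVCat mV a → IsVCat mV b → (∀ x y, a x y ≤ b (f x) (f y)) →
            ∀ x y, F (a x y) ≤ F (b (f x) (f y))),
        -- (2) `F` is preserving:
        (∀ (X : Type) (a : X → X → V), IsVCat mV a →
          IsVCat mW (fun x y => F (a x y))),
        -- (3) `F` is a lax morphism of quantales:
        Monotone F ∧ (⊤ : W) ≤ F ⊤ ∧ (∀ u v, mW (F u) (F v) ≤ F (mV u v)),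
        -- (4) `F` preserves asymmetric triangle triplets and `F ⊤ = ⊤`:
        (∀ u v w : V, mV u v ≤ w → mW (F u) (F v) ≤ F w) ∧ F ⊤ = ⊤ ] := by
  have hVbot : ∀ x : V, mV x ⊥ = ⊥ := by
    intro x
    have := hVdist x ∅
    simpa using this
  have hVbot' : ∀ x : V, mV ⊥ x = ⊥ := fun x => (hVcomm ⊥ x).trans (hVbot x)
  have hVunit' : ∀ x : V, mV x ⊤ = x := fun x => (hVcomm x ⊤).trans (hVunit x)
  tfae_have 1 → 2 := fun h => h.1
  tfae_have 2 → 4 := by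
    intro h
    constructor
    · intro u v w huv
      -- three-point V-category
      set a : Fin 3 → Fin 3 → V := ![![⊤, u, w], ![⊥, ⊤, v], ![⊥, ⊥, ⊤]] with ha
      have hcat : IsVCat mV a := by
        constructor
        · intro x; fin_cases x <;> simp [ha]
        · intro x y z
          fin_cases x <;> fin_cases y <;> fin_cases z <;>
            simp [ha, Matrix.vecHead, Matrix.vecTail, hVbot, hVbot', hVunit, hVunit', huv]
      have := h (Fin 3) a hcat
      have ht := this.2 0 2 1
      simpa [ha] using ht
    · -- unit: one-point category
      have hcat : IsVCat mV (fun (_ _ : PUnit) => (⊤ : V)) := by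
        constructor
        · intro _; exact le_rfl
        · intro _ _ _; exact le_top
      have := (h PUnit _ hcat).1 PUnit.unit
      exact le_antisymm le_top this
  tfae_have 4 → 3 := by
    rintro ⟨htri, htop⟩
    refine ⟨?_, ?_, ?_⟩
    · intro u v huv
      have h : mV ⊤ u ≤ v := by rw [hVunit]; exact huv
      have := htri ⊤ u v h
      rwa [htop, hWunit] at this
    · rw [htop]
    · intro u v; exact htri u v _ le_rfl
  tfae_have 3 → 1 := by
    rintro ⟨hmono, htop, hlax⟩
    constructor
    · intro X a ⟨hrefl, htrans⟩
      constructor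
      · intro x
        exact htop.trans (hmono (hrefl x))
      · intro x y z
        exact le_trans (hlax _ _) (hmono (htrans x y z))
    · intro X Y a b f _ _ hf x y
      exact hmono (hf x y)
  tfae_finish
end

section
/- A function F : [0,∞]^I → [0,∞] is an extended quasi-pseudometric aggregation function on products (i.e., for every family of extended quasi-pseudometric spaces {(X_i, d_i)}, F∘d_Π is an extended quasi-pseudometric on ∏ X_i) if and only if F, viewed as a map of quantales P₊^I → P₊, is a lax morphism, i.e., F is monotone with respect to the componentwise opposite order (equivalently: x ≤ y componentwise implies F(x) ≤ F(y)), F((0)_i) = 0, and F(x + y) ≤ F(x) + F(y) for all x, y ∈ [0,∞]^I. -/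
open ENNReal

/-- An extended quasi-pseudometric on `X`: `d x x = 0` and the triangle
inequality. -/
def IsEQPMetric {X : Type*} (d : X → X → ℝ≥0∞) : Prop :=
  (∀ x, d x x = 0) ∧ ∀ x y z, d x z ≤ d x y + d y z

/-! Sufficiency is the triangle inequality pushed through `F` by monotonicity and then
subadditivity. For necessity, test `F` on the one-point space (giving `F 0 = 0`) and on the
three-point space `0 → 1 → 2` with `d 0 1 = u i`, `d 1 2 = v i`, `d 0 2 = w i` and all backward
distances `∞`, a quasi-pseudometric as soon as `w i ≤ u i + v i`. The triangle inequality of the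
aggregate at the constant points `0, 1, 2` gives `F w ≤ F u + F v` whenever `w ≤ u + v`, which
contains subadditivity (`w = u + v`) and monotonicity (`v = 0`). -/

lemma isEQPMetric_zero (X : Type*) : IsEQPMetric (fun _ _ : X => (0 : ℝ≥0∞)) :=
  ⟨fun _ => rfl, fun _ _ _ => (add_zero 0).ge⟩

noncomputable def threePointDist (u v w : ℝ≥0∞) (a b : Fin 3) : ℝ≥0∞ :=
  if a = b then 0
  else if a = 0 ∧ b = 1 then u
  else if a = 1 ∧ b = 2 then v
  else if a = 0 ∧ b = 2 then w
  else ⊤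

lemma isEQPMetric_threePointDist {u v w : ℝ≥0∞} (h : w ≤ u + v) :
    IsEQPMetric (threePointDist u v w) := by
  refine ⟨fun a => by simp [threePointDist], fun a b c => ?_⟩
  fin_cases a <;> fin_cases b <;> fin_cases c <;> simp_all [threePointDist]

section Aggregation

variable {I : Type*} {F : (I → ℝ≥0∞) → ℝ≥0∞}

lemma isEQPMetric_pi_aggregate (hmono : Monotone F) (hzero : F 0 = 0)
    (hadd : ∀ x y, F (x + y) ≤ F x + F y) {X : I → Type*} {d : ∀ i, X i → X i → ℝ≥0∞}
    (hd : ∀ i, IsEQPMetric (d i)) :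
    IsEQPMetric (fun x y : ∀ i, X i => F (fun i => d i (x i) (y i))) := by
  refine ⟨fun x => ?_, fun x y z => ?_⟩
  · have hdiag : (fun i => d i (x i) (x i)) = 0 := funext fun i => (hd i).1 (x i)
    simp only [hdiag, hzero]
  · calc F (fun i => d i (x i) (z i))
        ≤ F (fun i => d i (x i) (y i) + d i (y i) (z i)) := hmono fun i => (hd i).2 _ _ _
      _ ≤ _ := hadd _ _

variable (H : ∀ (X : I → Type) (d : ∀ i, X i → X i → ℝ≥0∞),
  (∀ i, IsEQPMetric (d i)) → IsEQPMetric (fun x y : ∀ i, X i => F (fun i => d i (x i) (y i))))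
include H

lemma map_zero_of_isEQPMetric_aggregate : F 0 = 0 :=
  (H (fun _ => Unit) (fun _ _ _ => 0) fun _ => isEQPMetric_zero Unit).1 fun _ => ()

lemma map_le_add_of_isEQPMetric_aggregate {u v w : I → ℝ≥0∞} (h : w ≤ u + v) :
    F w ≤ F u + F v := by
  have hd := H (fun _ => Fin 3) (fun i => threePointDist (u i) (v i) (w i))
    fun i => isEQPMetric_threePointDist (h i)
  simpa [threePointDist] using hd.2 (fun _ => 0) (fun _ => 1) (fun _ => 2)

lemma monotone_of_isEQPMetric_aggregate : Monotone F := fun a b hab => by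
  simpa [map_zero_of_isEQPMetric_aggregate H] using
    map_le_add_of_isEQPMetric_aggregate H (v := 0) (by rwa [add_zero])

end Aggregation

/-- `F : [0,∞]^I → [0,∞]` is an extended quasi-pseudometric aggregation
function on products iff `F`, viewed as a map of quantales `P₊^I → P₊`, is a
lax morphism: `F` is monotone (w.r.t. the componentwise usual order,
equivalently isotone for the opposite orders), `F 0 = 0`, and `F` is
subadditive. -/
theorem stmt10 {I : Type*} (F : (I → ℝ≥0∞) → ℝ≥0∞) :
    (∀ (X : I → Type) (d : ∀ i, X i → X i → ℝ≥0∞),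
      (∀ i, IsEQPMetric (d i)) →
        IsEQPMetric (fun x y : ∀ i, X i => F (fun i => d i (x i) (y i)))) ↔
    (Monotone F ∧ F 0 = 0 ∧ ∀ x y, F (x + y) ≤ F x + F y) := by
  constructor
  · intro H
    exact ⟨monotone_of_isEQPMetric_aggregate H, map_zero_of_isEQPMetric_aggregate H,
      fun _ _ => map_le_add_of_isEQPMetric_aggregate H le_rfl⟩
  · rintro ⟨hmono, hzero, hadd⟩ X d hd
    exact isEQPMetric_pi_aggregate hmono hzero hadd hd
end

section
/- A function F : [0,∞]^I → [0,∞] is an extended quasi-pseudometric aggregation function on products if and only if it is an extended quasi-pseudometric aggregation function on sets (i.e., for every family {d_i} of extended quasi-pseudometrics on one set X, the map (x,y) ↦ F((d_i(x,y))_i) is an extended quasi-pseudometric on X). -/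
open ENNReal

/-- `F : [0,∞]^I → [0,∞]` is an extended quasi-pseudometric aggregation
function on products iff it is an extended quasi-pseudometric aggregation
function on sets. -/
theorem stmt11 {I : Type*} (F : (I → ℝ≥0∞) → ℝ≥0∞) :
    (∀ (X : I → Type) (d : ∀ i, X i → X i → ℝ≥0∞),
      (∀ i, IsEQPMetric (d i)) →
        IsEQPMetric (fun x y : ∀ i, X i => F (fun i => d i (x i) (y i)))) ↔
    (∀ (X : Type) (d : I → X → X → ℝ≥0∞),
      (∀ i, IsEQPMetric (d i)) →
        IsEQPMetric (fun x y : X => F (fun i => d i x y))) := by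
  constructor
  · intro hprod X d hd
    have h := hprod (fun _ => X) d hd
    obtain ⟨h0, ht⟩ := h
    refine ⟨fun x => h0 (fun _ => x), fun x y z => ht (fun _ => x) (fun _ => y) (fun _ => z)⟩
  · intro hset X d hd
    constructor
    · intro x
      have h := hset PUnit (fun i _ _ => d i (x i) (x i))
        (fun i => ⟨fun _ => (hd i).1 (x i), fun _ _ _ => by
          simp [(hd i).1 (x i)]⟩)
      exact h.1 PUnit.unit
    · intro x y z
      let p : Fin 3 → ∀ i, X i := ![x, y, z]
      have h := hset (Fin 3) (fun i a b => d i (p a i) (p b i))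
        (fun i => ⟨fun a => (hd i).1 (p a i),
          fun a b c => (hd i).2 (p a i) (p b i) (p c i)⟩)
      exact h.2 0 1 2
end

section
/- A function F : [0,∞)^I → [0,∞) is a quasi-pseudometric aggregation function on products if and only if F is isotone, subadditive (F(x + y) ≤ F(x) + F(y) for all x, y), and F((0)_i) = 0; equivalently, F preserves asymmetric triangle triplets and F((0)_i) = 0. -/
/-!
If `F` is isotone and subadditive, the triangle inequality of each factor passes through `F`,
and `F 0 = 0` gives `d x x = 0`. Conversely, any triplet `c ≤ a + b` is realised coordinatewise
as the three distances `d(0,1) = a`, `d(1,2) = b`, `d(0,2) = c` of a quasi-pseudometric on a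
three-point set, so the aggregated triangle inequality reads `F c ≤ F a + F b`; the triplets
`(y, 0, x)` with `x ≤ y` and `(x, y, x + y)` then give isotonicity and subadditivity.
-/

open NNReal

/-- A quasi-pseudometric on `X`, with values in `[0,∞)` (modelled by `ℝ≥0`):
`d x x = 0` and the triangle inequality. -/
def IsQPMetric {X : Type*} (d : X → X → ℝ≥0) : Prop :=
  (∀ x, d x x = 0) ∧ ∀ x y z, d x z ≤ d x y + d y z

def IsQPMetricAggregation {I : Type*} (F : (I → ℝ≥0) → ℝ≥0) : Prop :=
  ∀ (X : I → Type) (d : ∀ i, X i → X i → ℝ≥0), (∀ i, IsQPMetric (d i)) →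
    IsQPMetric (fun x y : ∀ i, X i => F (fun i => d i (x i) (y i)))

def PreservesTriangleTriplets {I : Type*} (F : (I → ℝ≥0) → ℝ≥0) : Prop :=
  ∀ a b c : I → ℝ≥0, c ≤ a + b → F c ≤ F a + F b

/-- The fallback distance `a + b + c` is large enough never to violate the triangle inequality. -/
def triangleDist (a b c : ℝ≥0) : Fin 3 → Fin 3 → ℝ≥0 := fun p q =>
  if p = q then 0 else
  if p = 0 ∧ q = 1 then a else
  if p = 1 ∧ q = 2 then b else
  if p = 0 ∧ q = 2 then c else a + b + c

theorem isQPMetric_triangleDist {a b c : ℝ≥0} (h : c ≤ a + b) :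
    IsQPMetric (triangleDist a b c) := by
  refine ⟨fun x => if_pos rfl, fun x y z => ?_⟩
  fin_cases x <;> fin_cases y <;> fin_cases z <;> simp [triangleDist, h] <;> bound

theorem isQPMetric_pi_of_monotone_of_subadditive {I : Type*} {F : (I → ℝ≥0) → ℝ≥0}
    (hmono : Monotone F) (hsub : ∀ x y, F (x + y) ≤ F x + F y) (h0 : F 0 = 0)
    {X : I → Type*} {d : ∀ i, X i → X i → ℝ≥0} (hd : ∀ i, IsQPMetric (d i)) :
    IsQPMetric (fun x y : ∀ i, X i => F (fun i => d i (x i) (y i))) := by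
  refine ⟨fun x => ?_, fun x y z => ?_⟩
  · have hdiag : (fun i => d i (x i) (x i)) = 0 := funext fun i => (hd i).1 (x i)
    simp only [hdiag, h0]
  · calc F (fun i => d i (x i) (z i))
        ≤ F ((fun i => d i (x i) (y i)) + fun i => d i (y i) (z i)) :=
          hmono fun i => (hd i).2 (x i) (y i) (z i)
      _ ≤ _ := hsub _ _

namespace IsQPMetricAggregation

variable {I : Type*} {F : (I → ℝ≥0) → ℝ≥0}

theorem map_zero (hF : IsQPMetricAggregation F) : F 0 = 0 :=
  (hF (fun _ => Unit) (fun _ _ _ => 0) fun _ => ⟨fun _ => rfl, by simp⟩).1 fun _ => ()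

theorem preservesTriangleTriplets (hF : IsQPMetricAggregation F) :
    PreservesTriangleTriplets F := fun a b c hc =>
  (hF (fun _ => Fin 3) (fun i => triangleDist (a i) (b i) (c i))
    fun i => isQPMetric_triangleDist (hc i)).2 (fun _ => 0) (fun _ => 1) (fun _ => 2)

end IsQPMetricAggregation

namespace PreservesTriangleTriplets

variable {I : Type*} {F : (I → ℝ≥0) → ℝ≥0}

theorem monotone (hF : PreservesTriangleTriplets F) (h0 : F 0 = 0) : Monotone F :=
  fun x y hxy => by simpa [h0] using hF y 0 x (by simpa using hxy)

theorem map_add_le (hF : PreservesTriangleTriplets F) (x y : I → ℝ≥0) :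
    F (x + y) ≤ F x + F y :=
  hF x y (x + y) le_rfl

end PreservesTriangleTriplets

/-- `F : [0,∞)^I → [0,∞)` is a quasi-pseudometric aggregation function on
products iff `F` is isotone, subadditive and `F 0 = 0`; equivalently, iff `F`
preserves asymmetric triangle triplets and `F 0 = 0`. -/
theorem stmt12 {I : Type*} (F : (I → ℝ≥0) → ℝ≥0) :
    ((∀ (X : I → Type) (d : ∀ i, X i → X i → ℝ≥0),
        (∀ i, IsQPMetric (d i)) →
          IsQPMetric (fun x y : ∀ i, X i => F (fun i => d i (x i) (y i)))) ↔
      (Monotone F ∧ (∀ x y, F (x + y) ≤ F x + F y) ∧ F 0 = 0)) ∧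
    ((∀ (X : I → Type) (d : ∀ i, X i → X i → ℝ≥0),
        (∀ i, IsQPMetric (d i)) →
          IsQPMetric (fun x y : ∀ i, X i => F (fun i => d i (x i) (y i)))) ↔
      ((∀ a b c : I → ℝ≥0, c ≤ a + b → F c ≤ F a + F b) ∧ F 0 = 0)) := by
  have aggregation_to_triplets :
      IsQPMetricAggregation F → PreservesTriangleTriplets F ∧ F 0 = 0 :=
    fun hF => ⟨hF.preservesTriangleTriplets, hF.map_zero⟩
  have triplets_to_isotone_subadditive :
      PreservesTriangleTriplets F ∧ F 0 = 0 →
        Monotone F ∧ (∀ x y, F (x + y) ≤ F x + F y) ∧ F 0 = 0 :=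
    fun ⟨hT, h0⟩ => ⟨hT.monotone h0, hT.map_add_le, h0⟩
  have isotone_subadditive_to_aggregation :
      Monotone F ∧ (∀ x y, F (x + y) ≤ F x + F y) ∧ F 0 = 0 → IsQPMetricAggregation F :=
    fun ⟨hmono, hsub, h0⟩ _ _ hd => isQPMetric_pi_of_monotone_of_subadditive hmono hsub h0 hd
  exact ⟨⟨triplets_to_isotone_subadditive ∘ aggregation_to_triplets,
      isotone_subadditive_to_aggregation⟩,
    ⟨aggregation_to_triplets,
      isotone_subadditive_to_aggregation ∘ triplets_to_isotone_subadditive⟩⟩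
end

section
/- The function F : [0,∞]² → [0,∞] defined by F(x₁, x₂) = 0 if x₁ = 0 and F(x₁, x₂) = 1 if x₁ ≠ 0 is an extended quasi-metric aggregation function on sets, but it is not a separately preserving function between the quantales P₊² and P₊ (equivalently, it fails to be an extended quasi-metric aggregation function on products). -/
/-! `F` only looks at whether the first distance vanishes, so on sets it acts through the
first quasi-metric alone and preserves it, being monotone, subadditive and zero exactly at
zero. On products the first component of a separated `P₊²`-category may vanish identically,
with separation carried by the second one; `F` then collapses everything to distance `0`. -/

open ENNReal

/-- An extended quasi-metric on `X`. -/
def IsEQMetric {X : Type*} (d : X → X → ℝ≥0∞) : Prop :=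
  (∀ x, d x x = 0) ∧ (∀ x y z, d x z ≤ d x y + d y z) ∧
  (∀ x y, d x y = 0 → d y x = 0 → x = y)

lemma IsEQMetric.comp {X : Type*} {d : X → X → ℝ≥0∞} (hd : IsEQMetric d) {f : ℝ≥0∞ → ℝ≥0∞}
    (hf_mono : Monotone f) (hf_add : ∀ s t, f (s + t) ≤ f s + f t)
    (hf_eq_zero : ∀ t, f t = 0 ↔ t = 0) : IsEQMetric (fun x y => f (d x y)) := by
  obtain ⟨hself, htri, hsep⟩ := hd
  refine ⟨fun x => (hf_eq_zero _).2 (hself x), fun x y z => ?_, fun x y hxy hyx => ?_⟩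
  · exact (hf_mono (htri x y z)).trans (hf_add _ _)
  · exact hsep x y ((hf_eq_zero _).1 hxy) ((hf_eq_zero _).1 hyx)

lemma isEQMetric_edist (X : Type*) [EMetricSpace X] : IsEQMetric (edist : X → X → ℝ≥0∞) :=
  ⟨edist_self, edist_triangle, fun _ _ h _ => edist_eq_zero.1 h⟩

lemma not_isEQMetric_zero {X : Type*} [Nontrivial X] : ¬ IsEQMetric (fun _ _ : X => 0) := by
  rintro ⟨-, -, hsep⟩
  obtain ⟨x, y, hxy⟩ := exists_pair_ne X
  exact hxy (hsep x y rfl rfl)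

noncomputable def zeroOne (t : ℝ≥0∞) : ℝ≥0∞ := if t = 0 then 0 else 1

lemma zeroOne_eq_zero_iff (t : ℝ≥0∞) : zeroOne t = 0 ↔ t = 0 := by
  unfold zeroOne; split_ifs <;> simp_all

lemma zeroOne_monotone : Monotone zeroOne := by
  intro s t hst
  unfold zeroOne
  split_ifs with hs ht ht
  exacts [le_rfl, zero_le, absurd (le_zero_iff.1 (ht ▸ hst)) hs, le_rfl]

lemma zeroOne_add_le (s t : ℝ≥0∞) : zeroOne (s + t) ≤ zeroOne s + zeroOne t := by
  unfold zeroOne; split_ifs <;> simp_all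

def IsSeparatedProdCategory {X : Type*} (a : X → X → ℝ≥0∞ × ℝ≥0∞) : Prop :=
  (∀ x, a x x = 0) ∧ (∀ x y z, a x y ≤ a x z + a z y) ∧
  (∀ x y, a x y = 0 → a y x = 0 → x = y)

lemma IsEQMetric.isSeparatedProdCategory_zero_prod {X : Type*} {d : X → X → ℝ≥0∞}
    (hd : IsEQMetric d) : IsSeparatedProdCategory (fun x y => ((0 : ℝ≥0∞), d x y)) := by
  obtain ⟨hself, htri, hsep⟩ := hd
  refine ⟨fun x => by simp [hself x], fun x y z => ?_, fun x y hxy hyx => ?_⟩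
  · exact Prod.mk_le_mk.2 ⟨by simp, htri x z y⟩
  · exact hsep x y (congrArg Prod.snd hxy) (congrArg Prod.snd hyx)

/-- The function `F(x₁,x₂) = 0` if `x₁ = 0` and `= 1` otherwise is an extended
quasi-metric aggregation function on sets, but it is not a separately
preserving function between the quantales `P₊²` and `P₊` (i.e. it does not
send every separated `P₊²`-category to a separated `P₊`-category;
equivalently, it is not an extended quasi-metric aggregation function on
products). -/
theorem stmt13 :
    letI F : ℝ≥0∞ → ℝ≥0∞ → ℝ≥0∞ := fun x₁ _ => if x₁ = 0 then 0 else 1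
    -- `F` is an extended quasi-metric aggregation function on sets:
    (∀ (X : Type) (d₁ d₂ : X → X → ℝ≥0∞), IsEQMetric d₁ → IsEQMetric d₂ →
      IsEQMetric (fun x y => F (d₁ x y) (d₂ x y))) ∧
    -- but `F` is not separately preserving from `P₊²` to `P₊`:
    ¬ (∀ (X : Type) (a : X → X → ℝ≥0∞ × ℝ≥0∞),
        (∀ x, a x x = 0) →
        (∀ x y z, a x y ≤ a x z + a z y) →
        (∀ x y, a x y = 0 → a y x = 0 → x = y) →
          IsEQMetric (fun x y => F (a x y).1 (a x y).2)) := by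
  refine ⟨fun _ _ _ hd₁ _ => hd₁.comp zeroOne_monotone zeroOne_add_le zeroOne_eq_zero_iff,
    fun H => ?_⟩
  obtain ⟨hself, htri, hsep⟩ := (isEQMetric_edist ℝ).isSeparatedProdCategory_zero_prod
  exact not_isEQMetric_zero (X := ℝ) (by simpa using H ℝ _ hself htri hsep)
end

section
/- Let F be a map between commutative integral quantales (V, ≼, *) and (W, ⋞, ⋆). The following are equivalent: (1) F is separately preserving (for every separated V-category (X,a), (X, F∘a) is a separated W-category); (2) F is a lax morphism of quantales with F⁻¹(1_W) = {1_V}; (3) F preserves asymmetric triangle triplets and F⁻¹(1_W) = {1_V}. -/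
/-- A `V`-category is separated if `⊤ ≤ a x y` and `⊤ ≤ a y x` imply
`x = y`. -/
def IsSeparated {V : Type*} [CompleteLattice V]
    {X : Type*} (a : X → X → V) : Prop :=
  ∀ x y, ⊤ ≤ a x y → ⊤ ≤ a y x → x = y

/-- For a map `F` between commutative integral quantales the following are
equivalent: (1) `F` is separately preserving; (2) `F` is a lax morphism with
`F⁻¹(1_W) = {1_V}`; (3) `F` preserves asymmetric triangle triplets and
`F⁻¹(1_W) = {1_V}` (the units being the top elements). -/
theorem stmt14 {V W : Type*} [CompleteLattice V] [CompleteLattice W]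
    (mV : V → V → V) (mW : W → W → W)
    (hVassoc : ∀ a b c, mV (mV a b) c = mV a (mV b c))
    (hVcomm : ∀ a b, mV a b = mV b a)
    (hVdist : ∀ (a : V) (s : Set V), mV a (sSup s) = ⨆ b ∈ s, mV a b)
    (hVunit : ∀ a, mV ⊤ a = a)
    (hWassoc : ∀ a b c, mW (mW a b) c = mW a (mW b c))
    (hWcomm : ∀ a b, mW a b = mW b a)
    (hWdist : ∀ (a : W) (s : Set W), mW a (sSup s) = ⨆ b ∈ s, mW a b)
    (hWunit : ∀ a, mW ⊤ a = a)
    (F : V → W) :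
    List.TFAE
      [ -- (1) `F` is separately preserving:
        (∀ (X : Type) (a : X → X → V), IsVCat mV a → IsSeparated a →
          IsVCat mW (fun x y => F (a x y)) ∧
          IsSeparated (fun x y => F (a x y))),
        -- (2) `F` is a lax morphism with `F⁻¹(⊤) = {⊤}`:
        (Monotone F ∧ (⊤ : W) ≤ F ⊤ ∧ (∀ u v, mW (F u) (F v) ≤ F (mV u v))) ∧
          F ⁻¹' {⊤} = {⊤},
        -- (3) `F` preserves asymmetric triangle triplets and `F⁻¹(⊤) = {⊤}`:
        (∀ u v w : V, mV u v ≤ w → mW (F u) (F v) ≤ F w) ∧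
          F ⁻¹' {⊤} = {⊤} ] := by
  -- monotonicity of mV derived from sSup-distributivity
  have hVmono : ∀ a : V, ∀ {b c : V}, b ≤ c → mV a b ≤ mV a c := by
    intro a b c h
    calc mV a b ≤ ⨆ x ∈ ({b, c} : Set V), mV a x :=
          le_iSup₂_of_le b (Set.mem_insert _ _) le_rfl
      _ = mV a (sSup {b, c}) := (hVdist a _).symm
      _ = mV a c := by rw [sSup_pair, sup_eq_right.2 h]
  have hVbot : ∀ a : V, mV a ⊥ = ⊥ := by
    intro a
    rw [show (⊥ : V) = sSup ∅ by simp, hVdist]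
    simp
  have hWmono : ∀ a : W, ∀ {b c : W}, b ≤ c → mW a b ≤ mW a c := by
    intro a b c h
    calc mW a b ≤ ⨆ x ∈ ({b, c} : Set W), mW a x :=
          le_iSup₂_of_le b (Set.mem_insert _ _) le_rfl
      _ = mW a (sSup {b, c}) := (hWdist a _).symm
      _ = mW a c := by rw [sSup_pair, sup_eq_right.2 h]
  tfae_have 2 → 3 := by
    rintro ⟨⟨hmono, _, hlax⟩, hpre⟩
    exact ⟨fun u v w h => (hlax u v).trans (hmono h), hpre⟩
  tfae_have 3 → 2 := by
    rintro ⟨htr, hpre⟩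
    have hFtop : F ⊤ = ⊤ := by
      have : (⊤ : V) ∈ F ⁻¹' {⊤} := by rw [hpre]; rfl
      exact this
    refine ⟨⟨?_, hFtop.ge, fun u v => htr u v _ le_rfl⟩, hpre⟩
    intro u v huv
    have := htr ⊤ u v (by rw [hVunit]; exact huv)
    rwa [hFtop, hWunit] at this
  tfae_have 3 → 1 := by
    rintro ⟨htr, hpre⟩
    have hFtop : F ⊤ = ⊤ := by
      have : (⊤ : V) ∈ F ⁻¹' {⊤} := by rw [hpre]; rfl
      exact this
    intro X a ⟨hrefl, htrans⟩ hsep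
    refine ⟨⟨?_, ?_⟩, ?_⟩
    · intro x
      show ⊤ ≤ F (a x x)
      rw [top_le_iff.1 (hrefl x), hFtop]
    · intro x y z
      exact htr _ _ _ (htrans x y z)
    · intro x y h1 h2
      have e1 : a x y = ⊤ := by
        have : a x y ∈ F ⁻¹' {⊤} := top_le_iff.1 h1
        rwa [hpre] at this
      have e2 : a y x = ⊤ := by
        have : a y x ∈ F ⁻¹' {⊤} := top_le_iff.1 h2
        rwa [hpre] at this
      exact hsep x y e1.ge e2.ge
  tfae_have 1 → 3 := by
    intro h1
    -- F ⊤ = ⊤ via the one-point category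
    have hFtop : F ⊤ = ⊤ := by
      have := (h1 Unit (fun _ _ => ⊤)
        ⟨fun _ => le_rfl, fun _ _ _ => (hVunit ⊤).le⟩
        (fun _ _ _ _ => rfl)).1.1 ()
      exact top_le_iff.1 this
    -- F ⁻¹' {⊤} = {⊤}
    have hpre : F ⁻¹' {⊤} = {⊤} := by
      ext u
      simp only [Set.mem_preimage, Set.mem_singleton_iff]
      constructor
      · intro hFu
        by_contra hne
        set a : Bool → Bool → V := fun x y => if x = y then ⊤ else u with ha
        have hcat : IsVCat mV a := by
          constructor
          · intro x; simp [ha]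
          · intro x y z
            have hint : mV u u ≤ u := by
              calc mV u u = mV u u := rfl
                _ ≤ mV u ⊤ := hVmono u le_top
                _ = u := by rw [hVcomm, hVunit]
            cases x <;> cases y <;> cases z <;>
              simp only [ha, if_pos rfl, if_neg, Bool.false_eq_true,
                Bool.true_eq_false, if_true, if_false, reduceIte] <;>
              first
                | exact le_top
                | exact (hVunit _).le
                | exact le_of_eq (by rw [hVcomm]; exact hVunit _)
                | exact hint
        have hs : IsSeparated a := by
          intro x y hxy hyx
          cases x <;> cases y <;> first
            | rfl
            | exact absurd (top_le_iff.1 (hxy : ⊤ ≤ u)) hne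
            | exact absurd (top_le_iff.1 (hyx : ⊤ ≤ u)) hne
        have := (h1 Bool a hcat hs).2 true false hFu.ge hFu.ge
        exact absurd this (by decide)
      · rintro rfl; exact hFtop
    refine ⟨?_, hpre⟩
    intro u v w huvw
    by_cases htriv : (⊥ : V) = ⊤
    · have hall : ∀ x : V, x = ⊤ := fun x => le_antisymm le_top (htriv ▸ bot_le)
      rw [hall u, hall v, hall w, hFtop, hWunit]
    · set a : Fin 3 → Fin 3 → V :=
        ![![⊤, u, w], ![⊥, ⊤, v], ![⊥, ⊥, ⊤]] with ha
      have hbotle : ∀ x y : V, mV ⊥ x ≤ y := by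
        intro x y
        rw [hVcomm, hVbot]; exact bot_le
      have hbotle' : ∀ x y : V, mV x ⊥ ≤ y := by
        intro x y; rw [hVbot]; exact bot_le
      have hcat : IsVCat mV a := by
        constructor
        · intro x
          fin_cases x <;> simp [ha]
        · intro x y z
          fin_cases x <;> fin_cases y <;> fin_cases z <;>
            simp only [ha, Matrix.cons_val_zero, Matrix.cons_val_one,
              Matrix.head_cons, Matrix.cons_val_two, Matrix.tail_cons] <;>
            first
              | exact le_top
              | exact hbotle _ _
              | exact hbotle' _ _
              | exact (hVunit _).le
              | exact le_of_eq (by rw [hVcomm]; exact hVunit _)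
              | exact huvw
      have hs : IsSeparated a := by
        intro x y hxy hyx
        fin_cases x <;> fin_cases y <;>
          first
            | rfl
            | exact absurd (top_le_iff.1 (hxy : ⊤ ≤ (⊥ : V))) htriv
            | exact absurd (top_le_iff.1 (hyx : ⊤ ≤ (⊥ : V))) htriv
      have := (h1 (Fin 3) a hcat hs).1.2 0 2 1
      exact this
  tfae_finish
end

section
/- A function F : [0,∞]^I → [0,∞] is an extended quasi-metric aggregation function on products if and only if F is a lax morphism from P₊^I to P₊ (isotone for the opposite orders, subadditive, F((0)_i) = 0) with F⁻¹(0) = {(0)_i}; in particular every extended quasi-metric aggregation function on products is isotone. -/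
open ENNReal

/-- A three-point extended quasi-metric with prescribed values `d 0 1 = u`,
`d 1 2 = v`, `d 0 2 = w`, and `⊤` in the backwards directions. -/
noncomputable def threeD (u v w : ℝ≥0∞) : Fin 3 → Fin 3 → ℝ≥0∞ := fun x y =>
  if x = y then 0
  else if x = 0 ∧ y = 1 then u
  else if x = 0 ∧ y = 2 then w
  else if x = 1 ∧ y = 2 then v
  else ⊤

lemma threeD_isEQMetric (u v w : ℝ≥0∞) (hw : w ≤ u + v) :
    IsEQMetric (threeD u v w) := by
  refine ⟨fun x => by simp [threeD], fun x y z => ?_, fun x y h1 h2 => ?_⟩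
  · fin_cases x <;> fin_cases y <;> fin_cases z <;>
      simp_all [threeD, le_top, add_comm, top_add, add_top]
  · fin_cases x <;> fin_cases y <;> simp_all [threeD]

lemma stmt15_aux {I : Type*} (F : (I → ℝ≥0∞) → ℝ≥0∞)
    (h : ∀ (X : I → Type) (d : ∀ i, X i → X i → ℝ≥0∞),
        (∀ i, IsEQMetric (d i)) →
          IsEQMetric (fun x y : ∀ i, X i => F (fun i => d i (x i) (y i)))) :
    Monotone F ∧ (∀ x y, F (x + y) ≤ F x + F y) ∧ F 0 = 0 ∧
        F ⁻¹' {0} = {0} := by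
  have hF0 : F 0 = 0 := by
    have := h (fun _ => Unit) (fun _ _ _ => 0)
      (fun i => ⟨fun _ => rfl, fun _ _ _ => by simp, fun x y _ _ => rfl⟩)
    exact this.1 (fun _ => ())
  have hmono : Monotone F := by
    intro a b hab
    have H := h (fun _ => Fin 3) (fun i => threeD (b i) 0 (a i))
      (fun i => threeD_isEQMetric _ _ _ (by simpa using hab i))
    have tri := H.2.1 (fun _ => (0 : Fin 3)) (fun _ => (1 : Fin 3)) (fun _ => (2 : Fin 3))
    simp only [threeD] at tri
    norm_num at tri
    calc F a ≤ F b + F (fun _ => 0) := tri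
      _ = F b := by rw [show (fun _ : I => (0:ℝ≥0∞)) = 0 from rfl, hF0, add_zero]
  refine ⟨hmono, ?_, hF0, ?_⟩
  · intro a b
    have H := h (fun _ => Fin 3) (fun i => threeD (a i) (b i) (a i + b i))
      (fun i => threeD_isEQMetric _ _ _ le_rfl)
    have tri := H.2.1 (fun _ => (0 : Fin 3)) (fun _ => (1 : Fin 3)) (fun _ => (2 : Fin 3))
    simp only [threeD] at tri
    norm_num at tri
    exact tri
  · ext a
    simp only [Set.mem_preimage, Set.mem_singleton_iff]
    constructor
    · intro ha
      classical
      set X : I → Type := fun i => {p : Bool // p = true → a i ≠ 0} with hX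
      set d : ∀ i, X i → X i → ℝ≥0∞ := fun i u v => if u.1 = v.1 then 0 else a i with hd
      have hdm : ∀ i, IsEQMetric (d i) := by
        intro i
        refine ⟨fun x => by simp [hd], fun x y z => ?_, fun x y h1 h2 => ?_⟩
        · by_cases hxz : x.1 = z.1
          · simp [hd, hxz]
          · by_cases hxy : x.1 = y.1
            · have hyz : y.1 ≠ z.1 := fun hh => hxz (hxy.trans hh)
              simp [hd, hxy, hyz, hxz]
            · simp only [hd, if_neg hxz, if_neg hxy]
              exact le_add_right le_rfl
        · by_cases hxy : x.1 = y.1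
          · exact Subtype.ext hxy
          · exfalso
            simp only [hd, hxy, if_neg] at h1
            rcases Bool.eq_false_or_eq_true x.1 with hx | hx
            · exact x.2 hx h1
            · rcases Bool.eq_false_or_eq_true y.1 with hy | hy
              · exact y.2 hy h1
              · exact hxy (hx.trans hy.symm)
      have H := h X d hdm
      set x : ∀ i, X i := fun i => ⟨false, by simp⟩ with hx
      set y : ∀ i, X i := fun i =>
        if hi : a i = 0 then ⟨false, by simp⟩ else ⟨true, fun _ => hi⟩ with hy
      have hxy : (fun i => d i (x i) (y i)) = a := by
        funext i
        by_cases hi : a i = 0 <;> simp [hd, hx, hy, hi]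
      have hyx : (fun i => d i (y i) (x i)) = a := by
        funext i
        by_cases hi : a i = 0 <;> simp [hd, hx, hy, hi]
      have := H.2.2 x y
        (by show F (fun i => d i (x i) (y i)) = 0; rw [hxy]; exact ha)
        (by show F (fun i => d i (y i) (x i)) = 0; rw [hyx]; exact ha)
      funext i
      show a i = 0
      by_contra hi
      have := congrFun this i
      rw [hx, hy] at this
      simp only [dif_neg hi] at this
      exact Bool.noConfusion (congrArg Subtype.val this)
    · rintro rfl; exact hF0

/-- `F : [0,∞]^I → [0,∞]` is an extended quasi-metric aggregation function on
products iff `F` is a lax morphism from `P₊^I` to `P₊` (monotone, subadditive,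
`F 0 = 0`) with `F⁻¹(0) = {0}`; in particular every extended quasi-metric
aggregation function on products is isotone. -/
theorem stmt15 {I : Type*} (F : (I → ℝ≥0∞) → ℝ≥0∞) :
    ((∀ (X : I → Type) (d : ∀ i, X i → X i → ℝ≥0∞),
        (∀ i, IsEQMetric (d i)) →
          IsEQMetric (fun x y : ∀ i, X i => F (fun i => d i (x i) (y i)))) ↔
      (Monotone F ∧ (∀ x y, F (x + y) ≤ F x + F y) ∧ F 0 = 0 ∧
        F ⁻¹' {0} = {0})) ∧
    ((∀ (X : I → Type) (d : ∀ i, X i → X i → ℝ≥0∞),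
        (∀ i, IsEQMetric (d i)) →
          IsEQMetric (fun x y : ∀ i, X i => F (fun i => d i (x i) (y i)))) →
      Monotone F) := by
  constructor
  · constructor
    · exact stmt15_aux F
    · rintro ⟨hmono, hsub, hF0, hpre⟩ X d hd
      refine ⟨fun x => ?_, fun x y z => ?_, fun x y h1 h2 => ?_⟩
      · have : (fun i => d i (x i) (x i)) = 0 := funext fun i => (hd i).1 (x i)
        show F (fun i => d i (x i) (x i)) = 0
        rw [this, hF0]
      · calc F (fun i => d i (x i) (z i))
            ≤ F ((fun i => d i (x i) (y i)) + fun i => d i (y i) (z i)) :=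
              hmono (fun i => (hd i).2.1 (x i) (y i) (z i))
          _ ≤ _ := hsub _ _
      · have h1' : (fun i => d i (x i) (y i)) = 0 := by
          have : (fun i => d i (x i) (y i)) ∈ F ⁻¹' {0} := h1
          rwa [hpre] at this
        have h2' : (fun i => d i (y i) (x i)) = 0 := by
          have : (fun i => d i (y i) (x i)) ∈ F ⁻¹' {0} := h2
          rwa [hpre] at this
        funext i
        exact (hd i).2.2 (x i) (y i) (congrFun h1' i) (congrFun h2' i)
  · exact fun h => (stmt15_aux F h).1
end

section
/- A map F between commutative integral quantales (V, ≼, *) and (W, ⋞, ⋆) is symmetrically preserving (for every symmetric V-category (X,a), (X, F∘a) is a symmetric W-category) if and only if F preserves triangle triplets and F(1_V) = 1_W. -/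
/-- `(u,v,w)` is a triangle triplet: every permutation `(u',v',w')` of it
satisfies `m u' v' ≤ w'`. -/
def IsTriangleTriplet {V : Type*} [CompleteLattice V] (m : V → V → V)
    (u v w : V) : Prop :=
  m u v ≤ w ∧ m v u ≤ w ∧ m u w ≤ v ∧ m w u ≤ v ∧ m v w ≤ u ∧ m w v ≤ u

/-- A map `F` between commutative integral quantales is symmetrically
preserving (every symmetric `V`-category is sent to a symmetric `W`-category)
iff `F` preserves triangle triplets and `F 1_V = 1_W` (the units being the
top elements). -/
theorem stmt16 {V W : Type*} [CompleteLattice V] [CompleteLattice W]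
    (mV : V → V → V) (mW : W → W → W)
    (hVassoc : ∀ a b c, mV (mV a b) c = mV a (mV b c))
    (hVcomm : ∀ a b, mV a b = mV b a)
    (hVdist : ∀ (a : V) (s : Set V), mV a (sSup s) = ⨆ b ∈ s, mV a b)
    (hVunit : ∀ a, mV ⊤ a = a)
    (hWassoc : ∀ a b c, mW (mW a b) c = mW a (mW b c))
    (hWcomm : ∀ a b, mW a b = mW b a)
    (hWdist : ∀ (a : W) (s : Set W), mW a (sSup s) = ⨆ b ∈ s, mW a b)
    (hWunit : ∀ a, mW ⊤ a = a)
    (F : V → W) :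
    (∀ (X : Type) (a : X → X → V), IsVCat mV a → (∀ x y, a x y = a y x) →
      IsVCat mW (fun x y => F (a x y)) ∧
      (∀ x y, F (a x y) = F (a y x))) ↔
    ((∀ u v w : V, IsTriangleTriplet mV u v w →
        IsTriangleTriplet mW (F u) (F v) (F w)) ∧ F ⊤ = ⊤) := by
  constructor
  · intro h
    constructor
    · intro u v w ht
      obtain ⟨h1, h2, h3, h4, h5, h6⟩ := ht
      set a : Fin 3 → Fin 3 → V := fun i j =>
        if i = j then ⊤ else
        if (i = 0 ∧ j = 1) ∨ (i = 1 ∧ j = 0) then u else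
        if (i = 1 ∧ j = 2) ∨ (i = 2 ∧ j = 1) then v else w with ha
      have hcat : IsVCat mV a := by
        constructor
        · intro x; simp [ha]
        · intro x y z
          fin_cases x <;> fin_cases y <;> fin_cases z <;>
            simp [ha, hVunit, hVcomm ⊤] <;>
            first
              | exact h1 | exact h2 | exact h3 | exact h4 | exact h5 | exact h6
              | (rw [hVcomm]; simp [hVunit])
              | exact le_top
      have hsym : ∀ x y, a x y = a y x := by
        intro x y; fin_cases x <;> fin_cases y <;> simp [ha]
      obtain ⟨⟨_, htri⟩, _⟩ := h (Fin 3) a hcat hsym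
      have e01 : a 0 1 = u := by simp [ha]
      have e10 : a 1 0 = u := by simp [ha]
      have e12 : a 1 2 = v := by simp [ha]
      have e21 : a 2 1 = v := by simp [ha]
      have e02 : a 0 2 = w := by simp [ha]
      have e20 : a 2 0 = w := by simp [ha]
      refine ⟨?_, ?_, ?_, ?_, ?_, ?_⟩
      · simpa only [e01, e12, e02] using htri 0 2 1
      · simpa only [e21, e10, e20] using htri 2 0 1
      · simpa only [e10, e02, e12] using htri 1 2 0
      · simpa only [e20, e01, e21] using htri 2 1 0
      · simpa only [e12, e20, e10] using htri 1 0 2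
      · simpa only [e02, e21, e01] using htri 0 1 2
    · have hcat : IsVCat mV (fun (_ _ : Unit) => (⊤ : V)) :=
        ⟨fun _ => le_rfl, fun _ _ _ => by rw [hVunit]⟩
      obtain ⟨⟨hr, _⟩, _⟩ := h Unit _ hcat (fun _ _ => rfl)
      exact le_antisymm le_top (hr ())
  · rintro ⟨hT, hF⟩ X a ⟨hr, htri⟩ hsym
    have haxx : ∀ x, a x x = ⊤ := fun x => le_antisymm le_top (hr x)
    refine ⟨⟨fun x => by simp only [haxx, hF]; exact le_rfl, ?_⟩, fun x y => by rw [hsym]⟩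
    intro x y z
    have htt : IsTriangleTriplet mV (a x z) (a z y) (a x y) := by
      refine ⟨htri x y z, ?_, ?_, ?_, ?_, ?_⟩
      · rw [hVcomm]; exact htri x y z
      · rw [hsym x z]; exact htri z y x
      · rw [hVcomm, hsym x z]; exact htri z y x
      · rw [hsym x y]; calc mV (a z y) (a y x) ≤ a z x := htri z x y
          _ = a x z := hsym z x
      · rw [hVcomm, hsym x y]; calc mV (a z y) (a y x) ≤ a z x := htri z x y
          _ = a x z := hsym z x
    exact (hT _ _ _ htt).1
end

section
/- A map F between commutative integral quantales is preserving (every V-category maps to a W-category under composition with F) if and only if it is symmetrically Cat-preserving, i.e., F is isotone, preserves triangle triplets, and F(1_V) = 1_W. -/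
/-- A three-element auxiliary type. -/
inductive Tri3 | t0 | t1 | t2

/-- A map `F` between commutative integral quantales is preserving (every
`V`-category is sent to a `W`-category) iff it is symmetrically
`Cat`-preserving, i.e. `F` is isotone, preserves triangle triplets, and
`F 1_V = 1_W` (the units being the top elements). -/
theorem stmt17 {V W : Type*} [CompleteLattice V] [CompleteLattice W]
    (mV : V → V → V) (mW : W → W → W)
    (hVassoc : ∀ a b c, mV (mV a b) c = mV a (mV b c))
    (hVcomm : ∀ a b, mV a b = mV b a)
    (hVdist : ∀ (a : V) (s : Set V), mV a (sSup s) = ⨆ b ∈ s, mV a b)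
    (hVunit : ∀ a, mV ⊤ a = a)
    (hWassoc : ∀ a b c, mW (mW a b) c = mW a (mW b c))
    (hWcomm : ∀ a b, mW a b = mW b a)
    (hWdist : ∀ (a : W) (s : Set W), mW a (sSup s) = ⨆ b ∈ s, mW a b)
    (hWunit : ∀ a, mW ⊤ a = a)
    (F : V → W) :
    (∀ (X : Type) (a : X → X → V), IsVCat mV a →
      IsVCat mW (fun x y => F (a x y))) ↔
    (Monotone F ∧
      (∀ u v w : V, IsTriangleTriplet mV u v w →
        IsTriangleTriplet mW (F u) (F v) (F w)) ∧ F ⊤ = ⊤) := by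
  -- basic consequences of the quantale axioms on V
  have hVmono : ∀ (a b c : V), b ≤ c → mV a b ≤ mV a c := by
    intro a b c h
    have h1 : mV a c = mV a (sSup {b, c}) := by
      rw [sSup_pair, sup_eq_right.mpr h]
    rw [h1, hVdist]
    exact le_biSup _ (Set.mem_insert b {c})
  have hVle2 : ∀ a b : V, mV a b ≤ b := by
    intro a b
    have h := hVmono b a ⊤ le_top
    rw [hVcomm b ⊤, hVunit] at h
    rw [hVcomm]; exact h
  have hVle1 : ∀ a b : V, mV a b ≤ a := by
    intro a b; rw [hVcomm]; exact hVle2 b a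
  have hVbot2 : ∀ a : V, mV a ⊥ = ⊥ := by
    intro a
    have h := hVdist a ∅
    simpa using h
  have hVbot1 : ∀ a : V, mV ⊥ a = ⊥ := by
    intro a; rw [hVcomm]; exact hVbot2 a
  have hVunit2 : ∀ a : V, mV a ⊤ = a := by
    intro a; rw [hVcomm, hVunit]
  constructor
  · intro h
    have hFtop : F ⊤ = ⊤ := by
      have hc : IsVCat mV (fun (_ _ : Unit) => (⊤ : V)) :=
        ⟨fun _ => le_rfl, fun _ _ _ => le_top⟩
      exact top_le_iff.mp ((h Unit _ hc).1 ())
    refine ⟨?_, ?_, hFtop⟩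
    · intro u v huv
      set a : Tri3 → Tri3 → V := fun i j => match i, j with
        | .t0, .t0 => ⊤ | .t1, .t1 => ⊤ | .t2, .t2 => ⊤
        | .t0, .t1 => ⊤ | .t1, .t2 => u | .t0, .t2 => v
        | _, _ => ⊥ with ha
      have hcat : IsVCat mV a := by
        constructor
        · intro x; cases x <;> simp [ha]
        · intro x y z
          cases x <;> cases y <;> cases z <;>
            simp only [ha, hVunit, hVunit2, hVbot1, hVbot2] <;>
            first | exact bot_le | exact le_top | exact le_rfl | exact huv
      have h2 := (h Tri3 a hcat).2 .t0 .t2 .t1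
      simp only [ha] at h2
      rwa [hFtop, hWunit] at h2
    · intro u v w ht
      obtain ⟨h1, h2, h3, h4, h5, h6⟩ := ht
      set b : Tri3 → Tri3 → V := fun i j => match i, j with
        | .t0, .t0 => ⊤ | .t1, .t1 => ⊤ | .t2, .t2 => ⊤
        | .t0, .t1 => w | .t1, .t0 => w
        | .t1, .t2 => u | .t2, .t1 => u
        | .t0, .t2 => v | .t2, .t0 => v with hb
      have hcat : IsVCat mV b := by
        constructor
        · intro x; cases x <;> simp [hb]
        · intro x y z
          cases x <;> cases y <;> cases z <;>
            simp only [hb, hVunit, hVunit2] <;>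
            first | exact le_top | exact le_rfl | exact h1 | exact h2 |
              exact h3 | exact h4 | exact h5 | exact h6
      have hw := (h Tri3 b hcat).2
      exact ⟨hw .t1 .t0 .t2, hw .t0 .t1 .t2, hw .t2 .t0 .t1,
        hw .t0 .t2 .t1, hw .t2 .t1 .t0, hw .t1 .t2 .t0⟩
  · rintro ⟨hmono, htri, hFtop⟩ X a ⟨hrefl, htrans⟩
    constructor
    · intro x
      have hx : a x x = ⊤ := top_le_iff.mp (hrefl x)
      simp only [hx, hFtop, le_refl]
    · intro x y z
      have ht : IsTriangleTriplet mV (a x z) (a z y) (mV (a x z) (a z y)) := by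
        refine ⟨le_rfl, le_of_eq (hVcomm _ _), ?_, ?_, ?_, ?_⟩
        · exact le_trans (hVle2 _ _) (hVle2 _ _)
        · rw [hVcomm]; exact le_trans (hVle2 _ _) (hVle2 _ _)
        · exact le_trans (hVle2 _ _) (hVle1 _ _)
        · rw [hVcomm]; exact le_trans (hVle2 _ _) (hVle1 _ _)
      exact le_trans (htri _ _ _ ht).1 (hmono (htrans x y z))
end

section
/- There exists a commutative integral quantale V (namely the three-element chain ⊥ ≺ x ≺ ⊤ with operation u * v = u ∧ v if u = ⊤ or v = ⊤ and u * v = ⊥ otherwise) and a function F : V → V (F(⊤) = ⊤, F(x) = ⊥, F(⊥) = x) that preserves triangle triplets (hence is symmetrically preserving) but does not preserve asymmetric triangle triplets (hence is not preserving). -/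
/-- On the three-element chain `⊥ = 0 < 1 < ⊤ = 2` (modelled by `Fin 3`) with
the operation `u * v = u ⊓ v` if `u = ⊤` or `v = ⊤` and `u * v = ⊥`
otherwise, one gets a commutative integral quantale, and the function `F`
with `F ⊤ = ⊤`, `F 1 = ⊥`, `F ⊥ = 1` preserves triangle triplets (hence is
symmetrically preserving) but does not preserve asymmetric triangle triplets
(hence is not preserving). -/
theorem stmt18 :
    letI m : Fin 3 → Fin 3 → Fin 3 :=
      fun u v => if u = ⊤ ∨ v = ⊤ then u ⊓ v else ⊥
    letI F : Fin 3 → Fin 3 :=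
      fun u => if u = ⊤ then ⊤ else if u = ⊥ then 1 else ⊥
    -- `(Fin 3, ≤, m)` is a commutative integral quantale:
    (∀ a b c, m (m a b) c = m a (m b c)) ∧
    (∀ a b, m a b = m b a) ∧
    (∀ (a : Fin 3) (s : Set (Fin 3)), m a (sSup s) = ⨆ b ∈ s, m a b) ∧
    (∀ a, m ⊤ a = a) ∧
    -- `F` preserves triangle triplets:
    (∀ u v w, IsTriangleTriplet m u v w →
      IsTriangleTriplet m (F u) (F v) (F w)) ∧
    -- but `F` does not preserve asymmetric triangle triplets:
    ¬ (∀ u v w, m u v ≤ w → m (F u) (F v) ≤ F w) := by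
  refine ⟨by decide, by decide, ?_, by decide, by unfold IsTriangleTriplet; decide,
    fun h => absurd (h ⊥ ⊤ 1 (by decide)) (by decide)⟩
  intro a s
  have hmono : ∀ (a b b' : Fin 3), b ≤ b' → (if a = ⊤ ∨ b = ⊤ then a ⊓ b else ⊥ : Fin 3) ≤ (if a = ⊤ ∨ b' = ⊤ then a ⊓ b' else ⊥) := by decide
  apply le_antisymm
  · rcases s.eq_empty_or_nonempty with rfl | hs
    · simp only [sSup_empty]
      have : (if a = ⊤ ∨ (⊥:Fin 3) = ⊤ then a ⊓ ⊥ else ⊥ : Fin 3) = ⊥ := by revert a; decide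
      simp [this]
    · have hmem : sSup s ∈ s := Set.Nonempty.csSup_mem hs (Set.toFinite s)
      exact le_biSup (fun b => if a = ⊤ ∨ b = ⊤ then a ⊓ b else ⊥) hmem
  · exact iSup₂_le fun b hb => hmono a b _ (le_sSup hb)
end
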